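/- arXiv:1802.09638 — 4 statements merged into one kernel-verified Lean document; each statement's English description precedes it below -/
import Mathlib

section
/- Let M and N be finitely generated left A-modules and let m be a positive integer. Suppose there is a split A-module epimorphism π : M^{⊕(m−1)} ↠ N. Then End_A(M) and End_A(M^{⊕m}) are each Morita equivalent to End_A(M ⊕ N). -/
universe u

open TensorProduct

set_option maxHeartbeats 1000000
set_option synthInstance.maxHeartbeats 1000000

noncomputable section

/-- The residue field `k(𝔭)` of `k` at a prime ideal `𝔭`. -/
abbrev resField (k : Type u) [CommRing k] (p : Ideal k) [p.IsPrime] : Type u :=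
  IsLocalRing.ResidueField (Localization.AtPrime p)

/-- A prime ideal `𝔭` has height at most one iff the localization `k_𝔭` has Krull
dimension at most one. -/
def HeightLEOne {k : Type u} [CommRing k] (p : Ideal k) [p.IsPrime] : Prop :=
  ringKrullDim (Localization.AtPrime p) ≤ 1

section QuotAlg

variable {k : Type u} [CommRing k] {A : Type u} [Ring A] [Algebra k A]

/-- The quotient of `A` by a two-sided ideal `J`, as a `k`-algebra. -/
instance quotAlgebra (J : TwoSidedIdeal A) : Algebra k J.ringCon.Quotient where
  algebraMap := ((RingCon.mk' J.ringCon : A →+* J.ringCon.Quotient).comp (algebraMap k A))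
  commutes' := fun c x => by
    obtain ⟨a, rfl⟩ := Quotient.exists_rep x
    show (RingCon.mk' J.ringCon) (algebraMap k A c) * (RingCon.mk' J.ringCon) a
        = (RingCon.mk' J.ringCon) a * (RingCon.mk' J.ringCon) (algebraMap k A c)
    rw [← map_mul, ← map_mul, Algebra.commutes]
  smul_def' := fun c x => by
    obtain ⟨a, rfl⟩ := Quotient.exists_rep x
    show _ = (RingCon.mk' J.ringCon) (algebraMap k A c) * (RingCon.mk' J.ringCon) a
    rw [← map_mul, ← Algebra.smul_def]
    rfl

/-- The two-sided ideal `J` is idempotent: `J * J = J` (as `k`-submodules of `A`). -/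
def IsIdempotentIdeal (k : Type u) [CommRing k] {A : Type u} [Ring A] [Algebra k A]
    (J : TwoSidedIdeal A) : Prop :=
  (J.asIdeal.restrictScalars k) * (J.asIdeal.restrictScalars k) = J.asIdeal.restrictScalars k

/-- A `k`-algebra `E` (finitely generated as a `k`-module) is `k`-semisimple if
`E(𝔭)` is a semisimple ring for every prime ideal `𝔭` of `k`. -/
def IsKSemisimple (k : Type u) [CommRing k] (E : Type u) [Ring E] [Algebra k E] : Prop :=
  ∀ (p : Ideal k) [p.IsPrime], IsSemisimpleRing (resField k p ⊗[k] E)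

/-- `J` is a heredity ideal of the `k`-algebra `A`:  (0) `A/J` is `k`-projective;
(1) `J` is projective as a left `A`-module;  (2) `J² = J`;
(3) `End_A(J)` is `k`-semisimple. -/
def IsHeredityIdeal (k : Type u) [CommRing k] (A : Type u) [Ring A] [Algebra k A]
    (J : TwoSidedIdeal A) : Prop :=
  Module.Projective k (A ⧸ (J.asIdeal.restrictScalars k)) ∧
  Module.Projective A J.asIdeal ∧
  IsIdempotentIdeal k J ∧
  IsKSemisimple k (Module.End A J.asIdeal)

/-- The natural map `J(𝔭) = k(𝔭) ⊗ J → A(𝔭) = k(𝔭) ⊗ A`. -/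
def fibreMap (J : TwoSidedIdeal A) (p : Ideal k) [p.IsPrime] :
    resField k p ⊗[k] J.asIdeal →ₗ[k] resField k p ⊗[k] A :=
  LinearMap.lTensor (resField k p) ((J.asIdeal.restrictScalars k).subtype)

/-- `J̄(𝔭)`:  the image of the natural map `J(𝔭) → A(𝔭)`, as a two-sided ideal
of `A(𝔭)`. -/
def fibreIdeal (J : TwoSidedIdeal A) (p : Ideal k) [p.IsPrime] :
    TwoSidedIdeal (resField k p ⊗[k] A) :=
  TwoSidedIdeal.span (Set.range (fibreMap J p))

/-- The natural surjection `J(𝔭) → J̄(𝔭)`. -/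
def fibreProj (J : TwoSidedIdeal A) (p : Ideal k) [p.IsPrime] :
    resField k p ⊗[k] J.asIdeal →ₗ[k]
      ((fibreIdeal J p).asIdeal.restrictScalars k) :=
  LinearMap.codRestrict _ (fibreMap J p) fun x =>
    TwoSidedIdeal.subset_span (Set.mem_range_self x)

end QuotAlg

section AlgebraTypes

variable (k : Type u) [CommRing k] (E : Type u) [Ring E] [Algebra k E]

/-- `E` is a separable `k`-algebra: `E` is projective as a module over `E ⊗[k] Eᵐᵒᵖ`. -/
def IsSeparableKAlgebra : Prop :=
  letI : Module (E ⊗[k] Eᵐᵒᵖ) E := TensorProduct.Algebra.module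
  Module.Projective (E ⊗[k] Eᵐᵒᵖ) E

/-- `E` is an Azumaya `k`-algebra: `E` is a faithful finitely generated projective
`k`-module and the natural map `E ⊗[k] Eᵐᵒᵖ → End_k(E)` is bijective. -/
def IsAzumayaKAlgebra : Prop :=
  FaithfulSMul k E ∧ Module.Finite k E ∧ Module.Projective k E ∧
    Function.Bijective
      (TensorProduct.Algebra.moduleAux (R := k) (A := E) (B := Eᵐᵒᵖ) (M := E))

/-- `E` is semisplit over `k`: a finite direct product of Azumaya `k`-algebras. -/
def IsSemisplitKAlgebra : Prop :=
  ∃ (n : ℕ) (B : Fin n → AlgCat.{u} k),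
    (∀ i, IsAzumayaKAlgebra k (B i)) ∧ Nonempty (E ≃ₐ[k] ((i : Fin n) → B i))

/-- `E` is split over `k`: a finite direct product of endomorphism algebras of
finitely generated projective `k`-modules. -/
def IsSplitKAlgebra : Prop :=
  ∃ (n : ℕ) (P : Fin n → ModuleCat.{u} k),
    (∀ i, Module.Finite k (P i) ∧ Module.Projective k (P i)) ∧
    Nonempty (E ≃ₐ[k] ((i : Fin n) → Module.End k (P i)))

/-- `E` is a finite direct product of central simple algebras over the field `F`. -/
def IsProdOfCentralSimple (F : Type u) [Field F] (E : Type u) [Ring E] [Algebra F E] : Prop :=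
  ∃ (n : ℕ) (B : Fin n → AlgCat.{u} F),
    (∀ i, Algebra.IsCentral F (B i) ∧ IsSimpleRing (B i) ∧ FiniteDimensional F (B i)) ∧
    Nonempty (E ≃ₐ[F] ((i : Fin n) → B i))

/-- Two rings are Morita equivalent if their categories of left modules are
equivalent. -/
def MoritaEquivalent (B C : Type u) [Ring B] [Ring C] : Prop :=
  Nonempty (ModuleCat.{u} B ≌ ModuleCat.{u} C)

end AlgebraTypes

section MoritaTheory
open CategoryTheory


section MoritaConstruction

variable (A : Type u) [Ring A] (M Q : Type u)
  [AddCommGroup M] [AddCommGroup Q] [Module A M] [Module A Q]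

/-- Precomposition by `r : End A M` as an `End A Q`-linear endomorphism of `Hom_A(M,Q)`. -/
def precompEnd (r : Module.End A M) :
    (M →ₗ[A] Q) →ₗ[Module.End A Q] (M →ₗ[A] Q) where
  toFun v := v ∘ₗ r
  map_add' v w := by ext x; rfl
  map_smul' e v := by ext x; rfl

variable (X : Type u) [AddCommGroup X] [Module (Module.End A Q) X]

noncomputable instance homFModule :
    Module (Module.End A M) ((M →ₗ[A] Q) →ₗ[Module.End A Q] X) where
  smul r ψ := LinearMap.comp ψ (precompEnd A M Q r)
  one_smul ψ := by
    ext v; show ψ (v ∘ₗ LinearMap.id) = ψ v; rw [LinearMap.comp_id]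
  mul_smul r s ψ := by
    ext v; show ψ (v ∘ₗ (r ∘ₗ s)) = ψ ((v ∘ₗ r) ∘ₗ s); rw [LinearMap.comp_assoc]
  smul_zero r := by ext v; rfl
  smul_add r ψ χ := by ext v; rfl
  add_smul r s ψ := by
    ext v
    show ψ (v ∘ₗ (r + s)) = ψ (v ∘ₗ r) + ψ (v ∘ₗ s)
    rw [← map_add]
    congr 1
    ext x; simp [LinearMap.add_apply]
  zero_smul ψ := by
    ext v
    show ψ (v ∘ₗ 0) = 0
    have h : (v ∘ₗ (0 : Module.End A M)) = 0 := by ext x; simp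
    rw [h, map_zero]

lemma homF_smul_apply (r : Module.End A M) (ψ : (M →ₗ[A] Q) →ₗ[Module.End A Q] X)
    (v : M →ₗ[A] Q) : (r • ψ) v = ψ (v ∘ₗ r) := rfl

end MoritaConstruction

section Unit

variable (A : Type u) [Ring A] (M Q : Type u)
  [AddCommGroup M] [AddCommGroup Q] [Module A M] [Module A Q]
  (X : Type u) [AddCommGroup X] [Module (Module.End A Q) X]

/-- Innermost layer of the unit map. -/
def unitAux (x : X) (u : Q →ₗ[A] M) : (M →ₗ[A] Q) →ₗ[Module.End A Q] X where
  toFun v := (v ∘ₗ u : Module.End A Q) • x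
  map_add' v w := by
    show ((v + w) ∘ₗ u : Module.End A Q) • x = _
    rw [LinearMap.add_comp, add_smul]
  map_smul' e v := by
    have h : ((e • v) ∘ₗ u : Module.End A Q) = e * (v ∘ₗ u) := by ext y; rfl
    simp only [RingHom.id_apply, h, mul_smul]

/-- Middle layer of the unit map. -/
def unitMid (x : X) :
    (Q →ₗ[A] M) →ₗ[Module.End A M] ((M →ₗ[A] Q) →ₗ[Module.End A Q] X) where
  toFun := unitAux A M Q X x
  map_add' u u' := by
    ext v; show (v ∘ₗ (u + u') : Module.End A Q) • x = _
    rw [LinearMap.comp_add, add_smul]; rfl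
  map_smul' r u := by
    ext v
    show (v ∘ₗ (r ∘ₗ u) : Module.End A Q) • x = ((v ∘ₗ r) ∘ₗ u : Module.End A Q) • x
    rw [LinearMap.comp_assoc]

/-- The unit map `X → Hom(Hom(M,Q) ⊗ -, X)`-style double dual. -/
def unitMap :
    X →ₗ[Module.End A Q]
      ((Q →ₗ[A] M) →ₗ[Module.End A M] ((M →ₗ[A] Q) →ₗ[Module.End A Q] X)) where
  toFun := unitMid A M Q X
  map_add' x y := by
    ext u v
    simp only [LinearMap.add_apply]
    exact smul_add ((v ∘ₗ u : Module.End A Q)) x y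
  map_smul' e x := by
    ext u v
    show (v ∘ₗ u : Module.End A Q) • (e • x) = (v ∘ₗ (u ∘ₗ e) : Module.End A Q) • x
    rw [← mul_smul]
    rfl

lemma unitMap_apply (x : X) (u : Q →ₗ[A] M) (v : M →ₗ[A] Q) :
    unitMap A M Q X x u v = (v ∘ₗ u : Module.End A Q) • x := rfl

theorem unitMap_bijective {ι : Type} [Fintype ι] (a : ι → (M →ₗ[A] Q)) (b : ι → (Q →ₗ[A] M))
    (hab : ∑ i, a i ∘ₗ b i = LinearMap.id) :
    Function.Bijective (unitMap A M Q X) := by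
  constructor
  · intro x y hxy
    have key : ∀ z : X, z = ∑ i, (a i ∘ₗ b i : Module.End A Q) • z := by
      intro z
      rw [← Finset.sum_smul, hab]
      exact (one_smul _ z).symm
    rw [key x, key y]
    refine Finset.sum_congr rfl fun i _ => ?_
    have := congrArg (fun Φ => Φ (b i) (a i)) hxy
    simpa only [unitMap_apply] using this
  · intro Ψ
    refine ⟨∑ i, Ψ (b i) (a i), ?_⟩
    ext u v
    rw [map_sum, LinearMap.sum_apply, LinearMap.sum_apply]
    have step : ∀ i, unitMap A M Q X (Ψ (b i) (a i)) u v = Ψ (u ∘ₗ (a i ∘ₗ b i)) v := by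
      intro i
      rw [unitMap_apply, ← map_smul (Ψ (b i))]
      have h2 : ((v ∘ₗ u : Module.End A Q) • a i) = v ∘ₗ ((u ∘ₗ a i : Module.End A M) : M →ₗ[A] M) := by
        ext x; rfl
      rw [h2, ← homF_smul_apply, ← map_smul Ψ]
      have h3 : ((u ∘ₗ a i : Module.End A M) • b i) = u ∘ₗ (a i ∘ₗ b i) := by
        ext q; rfl
      rw [h3]
    rw [Finset.sum_congr rfl fun i _ => step i]
    have hcomp : ∑ i, u ∘ₗ (a i ∘ₗ b i) = u ∘ₗ (∑ i, a i ∘ₗ b i) := by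
      ext q
      simp [LinearMap.sum_apply, map_sum]
    calc ∑ i, Ψ (u ∘ₗ (a i ∘ₗ b i)) v
        = Ψ (∑ i, u ∘ₗ (a i ∘ₗ b i)) v := by rw [map_sum, LinearMap.sum_apply]
      _ = Ψ u v := by rw [hcomp, hab, LinearMap.comp_id]

end Unit

section Functors

variable (A : Type u) [Ring A] (M Q : Type u)
  [AddCommGroup M] [AddCommGroup Q] [Module A M] [Module A Q]

/-- Postcomposition on `Hom_{End Q}(Hom_A(M,Q), ·)`, as an `End A M`-linear map. -/
noncomputable def homFunctorMap {X Y : Type u} [AddCommGroup X] [AddCommGroup Y]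
    [Module (Module.End A Q) X] [Module (Module.End A Q) Y]
    (f : X →ₗ[Module.End A Q] Y) :
    ((M →ₗ[A] Q) →ₗ[Module.End A Q] X) →ₗ[Module.End A M]
      ((M →ₗ[A] Q) →ₗ[Module.End A Q] Y) where
  toFun ψ := f ∘ₗ ψ
  map_add' ψ χ := LinearMap.ext fun v => by
    show f (ψ v + χ v) = f (ψ v) + f (χ v)
    rw [map_add]
  map_smul' r ψ := LinearMap.ext fun v => rfl

/-- The functor `Mod-End(Q) ⥤ Mod-End(M)` given by `X ↦ Hom_{End Q}(Hom_A(M,Q), X)`. -/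
noncomputable def homFunctor :
    ModuleCat.{u} (Module.End A Q) ⥤ ModuleCat.{u} (Module.End A M) where
  obj X := ModuleCat.of _ ((M →ₗ[A] Q) →ₗ[Module.End A Q] X)
  map {X Y} f := ModuleCat.ofHom (homFunctorMap A M Q f.hom)
  map_id X := by
    refine ModuleCat.hom_ext (LinearMap.ext fun ψ => LinearMap.ext fun v => rfl)
  map_comp f g := by
    refine ModuleCat.hom_ext (LinearMap.ext fun ψ => LinearMap.ext fun v => rfl)

/-- The Morita equivalence between module categories of `End A Q` and `End A M`,
given mutual finite domination. -/
noncomputable def moritaEquiv {ι κ : Type} [Fintype ι] [Fintype κ]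
    (a : ι → (M →ₗ[A] Q)) (b : ι → (Q →ₗ[A] M))
    (hab : ∑ i, a i ∘ₗ b i = LinearMap.id)
    (c : κ → (Q →ₗ[A] M)) (d : κ → (M →ₗ[A] Q))
    (hcd : ∑ i, c i ∘ₗ d i = LinearMap.id) :
    ModuleCat.{u} (Module.End A Q) ≌ ModuleCat.{u} (Module.End A M) := by
  refine CategoryTheory.Equivalence.mk (homFunctor A M Q) (homFunctor A Q M) ?_ ?_
  · -- unit : 𝟭 ≅ homFunctor A M Q ⋙ homFunctor A Q M
    refine CategoryTheory.NatIso.ofComponents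
      (fun X => (LinearEquiv.ofBijective (unitMap A M Q X)
        (unitMap_bijective A M Q X a b hab)).toModuleIso) ?_
    intro X Y f
    refine ModuleCat.hom_ext (LinearMap.ext fun x => LinearMap.ext fun u => LinearMap.ext fun v => ?_)
    show (v ∘ₗ u : Module.End A Q) • f.hom x = f.hom ((v ∘ₗ u : Module.End A Q) • x)
    rw [map_smul]
  · -- counit : homFunctor A Q M ⋙ homFunctor A M Q ≅ 𝟭
    refine (CategoryTheory.NatIso.ofComponents
      (fun Y => (LinearEquiv.ofBijective (unitMap A Q M Y)
        (unitMap_bijective A Q M Y c d hcd)).toModuleIso) ?_).symm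
    intro X Y f
    refine ModuleCat.hom_ext (LinearMap.ext fun x => LinearMap.ext fun u => LinearMap.ext fun v => ?_)
    show (v ∘ₗ u : Module.End A M) • f.hom x = f.hom ((v ∘ₗ u : Module.End A M) • x)
    rw [map_smul]

end Functors

section Apps

variable (A : Type u) [Ring A] (M N : Type u)
  [AddCommGroup M] [AddCommGroup N] [Module A M] [Module A N]

theorem morita_part1 (m : ℕ)
    (π : (Fin (m - 1) → M) →ₗ[A] N) (σ : N →ₗ[A] (Fin (m - 1) → M))
    (hσ : π ∘ₗ σ = LinearMap.id) :
    Nonempty (ModuleCat.{u} (Module.End A M) ≌ ModuleCat.{u} (Module.End A (M × N))) := by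
  have hπσ : ∀ y, π (σ y) = y := fun y => congrArg (fun f => f y) (congrArg DFunLike.coe hσ)
  -- family exhibiting M × N as a summand of M^m
  let a : Option (Fin (m - 1)) → (M →ₗ[A] (M × N)) := fun i =>
    Option.rec (LinearMap.inl A M N)
      (fun t => (LinearMap.inr A M N) ∘ₗ π ∘ₗ LinearMap.single A (fun _ => M) t) i
  let b : Option (Fin (m - 1)) → ((M × N) →ₗ[A] M) := fun i =>
    Option.rec (LinearMap.fst A M N)
      (fun t => (LinearMap.proj t) ∘ₗ σ ∘ₗ LinearMap.snd A M N) i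
  have hab : ∑ i, a i ∘ₗ b i = LinearMap.id := by
    apply LinearMap.ext
    rintro ⟨x, y⟩
    rw [LinearMap.sum_apply, Fintype.sum_option]
    have h1 : ∀ t, (a (some t) ∘ₗ b (some t)) (x, y)
        = LinearMap.inr A M N (π (Pi.single t (σ y t))) := by
      intro t; rfl
    rw [Finset.sum_congr rfl fun t _ => h1 t, ← map_sum, ← map_sum,
      Finset.univ_sum_single, hπσ]
    show (x, (0 : N)) + ((0 : M), y) = (x, y)
    simp
  have hcd : ∑ _i : Unit, (LinearMap.fst A M N) ∘ₗ (LinearMap.inl A M N) = LinearMap.id := by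
    apply LinearMap.ext
    intro x
    simp
  exact ⟨(moritaEquiv A M (M × N) a b hab (fun _ : Unit => LinearMap.fst A M N)
    (fun _ => LinearMap.inl A M N) hcd).symm⟩

theorem morita_part2 (n : ℕ)
    (π : (Fin n → M) →ₗ[A] N) (σ : N →ₗ[A] (Fin n → M))
    (hσ : π ∘ₗ σ = LinearMap.id) :
    Nonempty (ModuleCat.{u} (Module.End A (Fin (n + 1) → M)) ≌
      ModuleCat.{u} (Module.End A (M × N))) := by
  have hπσ : ∀ y, π (σ y) = y := fun y => congrArg (fun f => f y) (congrArg DFunLike.coe hσ)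
  -- M × N is a summand of (Fin (n+1) → M)
  let v : (Fin (n + 1) → M) →ₗ[A] (M × N) :=
    LinearMap.prod (LinearMap.proj 0) (π ∘ₗ LinearMap.pi (fun i => LinearMap.proj i.succ))
  let u : (M × N) →ₗ[A] (Fin (n + 1) → M) :=
    LinearMap.pi (fun j => Fin.cases (LinearMap.fst A M N)
      (fun i => (LinearMap.proj i) ∘ₗ σ ∘ₗ LinearMap.snd A M N) j)
  have hab : ∑ _i : Unit, v ∘ₗ u = LinearMap.id := by
    apply LinearMap.ext
    rintro ⟨x, y⟩
    rw [Finset.sum_const, Finset.card_univ, Fintype.card_unit, one_smul]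
    have h1 : u (x, y) = Fin.cases x (fun i => σ y i) := by
      funext j
      induction j using Fin.cases with
      | zero => rfl
      | succ i => rfl
    show v (u (x, y)) = (x, y)
    rw [h1]
    have h2 : v (Fin.cases x (fun i => σ y i)) = (x, π (σ y)) := by
      show (_, π _) = (x, π (σ y))
      refine Prod.ext rfl ?_
      show π (fun i => (Fin.cases x (fun i => σ y i) : ∀ _ : Fin (n+1), M) i.succ)
          = π (σ y)
      exact congrArg π (funext fun i => by simp)
    rw [h2, hπσ]
  -- (Fin (n+1) → M) is a summand of (M × N)^(n+1)
  let c : Fin (n + 1) → ((M × N) →ₗ[A] (Fin (n + 1) → M)) := fun j =>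
    (LinearMap.single A (fun _ => M) j) ∘ₗ LinearMap.fst A M N
  let d : Fin (n + 1) → ((Fin (n + 1) → M) →ₗ[A] (M × N)) := fun j =>
    (LinearMap.inl A M N) ∘ₗ LinearMap.proj j
  have hcd : ∑ j, c j ∘ₗ d j = LinearMap.id := by
    apply LinearMap.ext
    intro w
    rw [LinearMap.sum_apply]
    have h1 : ∀ j, (c j ∘ₗ d j) w = Pi.single j (w j) := by intro j; rfl
    rw [Finset.sum_congr rfl fun j _ => h1 j, Finset.univ_sum_single]
    rfl
  exact ⟨(moritaEquiv A (Fin (n + 1) → M) (M × N) (fun _ : Unit => v) (fun _ => u) hab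
    c d hcd).symm⟩

end Apps

end MoritaTheory

/-- If `π : M^{⊕(m-1)} ↠ N` is a split `A`-module epimorphism, then
`End_A(M)` and `End_A(M^{⊕m})` are each Morita equivalent to `End_A(M ⊕ N)`. -/
theorem stmt_1 (k : Type u) [CommRing k] [IsNoetherianRing k]
    (A : Type u) [Ring A] [Algebra k A] [Module.Finite k A] [Module.Projective k A]
    (M N : Type u) [AddCommGroup M] [AddCommGroup N] [Module A M] [Module A N]
    [Module.Finite A M] [Module.Finite A N]
    (m : ℕ) (hm : 0 < m)
    (π : (Fin (m - 1) → M) →ₗ[A] N) (hπ : Function.Surjective π)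
    (σ : N →ₗ[A] (Fin (m - 1) → M)) (hσ : π ∘ₗ σ = LinearMap.id) :
    MoritaEquivalent (Module.End A M) (Module.End A (M × N)) ∧
    MoritaEquivalent (Module.End A (Fin m → M)) (Module.End A (M × N)) := by
  obtain ⟨n, rfl⟩ : ∃ n, m = n + 1 := ⟨m - 1, (Nat.succ_pred_eq_of_pos hm).symm⟩
  exact ⟨morita_part1 A M N (n + 1) π σ hσ, morita_part2 A M N n π σ hσ⟩

end
end

section
/- Suppose J = AeA for an idempotent e ∈ A and that J is projective as a left A-module. Then eA is a projective left eAe-module, and the natural multiplication map Ae ⊗_{eAe} eA → J, a ⊗ b ↦ ab, is bijective. -/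
universe u

open TensorProduct

set_option maxHeartbeats 1000000
set_option synthInstance.maxHeartbeats 1000000

noncomputable section

section Corner

/-- An idempotent element of a ring `A`. -/
structure Idem (A : Type u) [Ring A] where
  e : A
  idem : e * e = e

variable {A : Type u} [Ring A]

/-- The corner ring `eAe = {x | e * x * e = x}` of an idempotent `e`. -/
def Corner (f : Idem A) : Type u := {x : A // f.e * x * f.e = x}

namespace Corner

variable {f : Idem A}

lemma e_mul (x : Corner f) : f.e * x.1 = x.1 := by
  calc f.e * x.1 = f.e * (f.e * x.1 * f.e) := by rw [x.2]
    _ = (f.e * f.e) * x.1 * f.e := by rw [← mul_assoc, ← mul_assoc]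
    _ = f.e * x.1 * f.e := by rw [f.idem]
    _ = x.1 := x.2

lemma mul_e (x : Corner f) : x.1 * f.e = x.1 := by
  calc x.1 * f.e = (f.e * x.1 * f.e) * f.e := by rw [x.2]
    _ = f.e * x.1 * (f.e * f.e) := by rw [mul_assoc]
    _ = f.e * x.1 * f.e := by rw [f.idem]
    _ = x.1 := x.2

instance : Add (Corner f) := ⟨fun x y => ⟨x.1 + y.1, by rw [mul_add, add_mul, x.2, y.2]⟩⟩
instance : Zero (Corner f) := ⟨⟨0, by simp⟩⟩
instance : SMul ℕ (Corner f) := ⟨fun n x => ⟨n • x.1, by rw [mul_smul_comm, smul_mul_assoc, x.2]⟩⟩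
instance : Neg (Corner f) := ⟨fun x => ⟨-x.1, by rw [mul_neg, neg_mul, x.2]⟩⟩
instance : Sub (Corner f) := ⟨fun x y => ⟨x.1 - y.1, by rw [mul_sub, sub_mul, x.2, y.2]⟩⟩
instance : SMul ℤ (Corner f) := ⟨fun n x => ⟨n • x.1, by rw [mul_smul_comm, smul_mul_assoc, x.2]⟩⟩
instance : Mul (Corner f) :=
  ⟨fun x y => ⟨x.1 * y.1, by rw [mul_assoc, mul_assoc, mul_e y, ← mul_assoc, e_mul x]⟩⟩
instance : One (Corner f) := ⟨⟨f.e, by rw [f.idem, f.idem]⟩⟩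

instance addCommGroup : AddCommGroup (Corner f) :=
  Function.Injective.addCommGroup _ Subtype.coe_injective
    rfl (fun _ _ ↦ rfl) (fun _ ↦ rfl) (fun _ _ ↦ rfl) (fun _ _ ↦ rfl) (fun _ _ ↦ rfl)

instance ring : Ring (Corner f) :=
  { Corner.addCommGroup with
    mul := (· * ·)
    one := 1
    mul_assoc := fun x y z => Subtype.ext (mul_assoc x.1 y.1 z.1)
    one_mul := fun x => Subtype.ext (e_mul x)
    mul_one := fun x => Subtype.ext (mul_e x)
    left_distrib := fun x y z => Subtype.ext (mul_add x.1 y.1 z.1)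
    right_distrib := fun x y z => Subtype.ext (add_mul x.1 y.1 z.1)
    zero_mul := fun x => Subtype.ext (zero_mul x.1)
    mul_zero := fun x => Subtype.ext (mul_zero x.1) }

end Corner

/-- The left ideal `Ae = {x | x * e = x}` of the idempotent `e`. -/
def rightFix (f : Idem A) : Type u := {x : A // x * f.e = x}

/-- The right ideal `eA = {x | e * x = x}` of the idempotent `e`. -/
def leftFix (f : Idem A) : Type u := {x : A // f.e * x = x}

namespace rightFix

variable {f : Idem A}

instance : Add (rightFix f) := ⟨fun x y => ⟨x.1 + y.1, by rw [add_mul, x.2, y.2]⟩⟩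
instance : Zero (rightFix f) := ⟨⟨0, by simp⟩⟩
instance : SMul ℕ (rightFix f) := ⟨fun n x => ⟨n • x.1, by rw [smul_mul_assoc, x.2]⟩⟩
instance : Neg (rightFix f) := ⟨fun x => ⟨-x.1, by rw [neg_mul, x.2]⟩⟩
instance : Sub (rightFix f) := ⟨fun x y => ⟨x.1 - y.1, by rw [sub_mul, x.2, y.2]⟩⟩
instance : SMul ℤ (rightFix f) := ⟨fun n x => ⟨n • x.1, by rw [smul_mul_assoc, x.2]⟩⟩

instance addCommGroup : AddCommGroup (rightFix f) :=
  Function.Injective.addCommGroup _ Subtype.coe_injective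
    rfl (fun _ _ ↦ rfl) (fun _ ↦ rfl) (fun _ _ ↦ rfl) (fun _ _ ↦ rfl) (fun _ _ ↦ rfl)

/-- `Ae` is a right module over the corner ring `eAe`. -/
instance : SMul (Corner f)ᵐᵒᵖ (rightFix f) :=
  ⟨fun c x => ⟨x.1 * c.unop.1, by rw [mul_assoc, Corner.mul_e]⟩⟩

end rightFix

namespace leftFix

variable {f : Idem A}

instance : Add (leftFix f) := ⟨fun x y => ⟨x.1 + y.1, by rw [mul_add, x.2, y.2]⟩⟩
instance : Zero (leftFix f) := ⟨⟨0, by simp⟩⟩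
instance : SMul ℕ (leftFix f) := ⟨fun n x => ⟨n • x.1, by rw [mul_smul_comm, x.2]⟩⟩
instance : Neg (leftFix f) := ⟨fun x => ⟨-x.1, by rw [mul_neg, x.2]⟩⟩
instance : Sub (leftFix f) := ⟨fun x y => ⟨x.1 - y.1, by rw [mul_sub, x.2, y.2]⟩⟩
instance : SMul ℤ (leftFix f) := ⟨fun n x => ⟨n • x.1, by rw [mul_smul_comm, x.2]⟩⟩

instance addCommGroup : AddCommGroup (leftFix f) :=
  Function.Injective.addCommGroup _ Subtype.coe_injective
    rfl (fun _ _ ↦ rfl) (fun _ ↦ rfl) (fun _ _ ↦ rfl) (fun _ _ ↦ rfl) (fun _ _ ↦ rfl)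

/-- `eA` is a left module over the corner ring `eAe`. -/
instance : SMul (Corner f) (leftFix f) :=
  ⟨fun c x => ⟨c.1 * x.1, by rw [← mul_assoc, Corner.e_mul]⟩⟩

instance : Module (Corner f) (leftFix f) where
  one_smul x := Subtype.ext x.2
  mul_smul c d x := Subtype.ext (mul_assoc c.1 d.1 x.1)
  smul_zero c := Subtype.ext (mul_zero c.1)
  smul_add c x y := Subtype.ext (mul_add c.1 x.1 y.1)
  add_smul c d x := Subtype.ext (add_mul c.1 d.1 x.1)
  zero_smul x := Subtype.ext (zero_mul x.1)

end leftFix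

variable (f : Idem A)

/-- The multiplication map `Ae × eA → A`, as a `ℤ`-bilinear map. -/
def cornerMulBil : rightFix f →ₗ[ℤ] leftFix f →ₗ[ℤ] A :=
  LinearMap.mk₂ ℤ (fun x y => x.1 * y.1)
    (fun x x' y => add_mul x.1 x'.1 y.1)
    (fun c x y => smul_mul_assoc c x.1 y.1)
    (fun x y y' => mul_add x.1 y.1 y'.1)
    (fun c x y => mul_smul_comm c x.1 y.1)

/-- The subgroup of balancing relations in `Ae ⊗_ℤ eA`, whose quotient
realizes `Ae ⊗_{eAe} eA`. -/
def cornerRel : Submodule ℤ (rightFix f ⊗[ℤ] leftFix f) :=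
  Submodule.span ℤ
    {t | ∃ (x : rightFix f) (c : Corner f) (y : leftFix f),
      t = (MulOpposite.op c • x) ⊗ₜ[ℤ] y - x ⊗ₜ[ℤ] (c • y)}

/-- The balanced tensor product `Ae ⊗_{eAe} eA`, realized as a quotient of `Ae ⊗_ℤ eA`. -/
def cornerTensor : Type u := (rightFix f ⊗[ℤ] leftFix f) ⧸ cornerRel f

instance : AddCommGroup (cornerTensor f) :=
  inferInstanceAs (AddCommGroup ((rightFix f ⊗[ℤ] leftFix f) ⧸ cornerRel f))

instance : Module ℤ (cornerTensor f) :=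
  inferInstanceAs (Module ℤ ((rightFix f ⊗[ℤ] leftFix f) ⧸ cornerRel f))

end Corner

section Stmt3Aux

variable {A : Type u} [Ring A] (f : Idem A)

namespace Stmt3

/-- `e` as an element of `Ae`. -/
def er : rightFix f := ⟨f.e, f.idem⟩

/-- `e` as an element of `eA`. -/
def el : leftFix f := ⟨f.e, f.idem⟩

/-- `Ae` is a left `A`-module. -/
instance : Module A (rightFix f) where
  smul a x := ⟨a * x.1, by rw [mul_assoc, x.2]⟩
  one_smul x := Subtype.ext (one_mul x.1)
  mul_smul a b x := Subtype.ext (mul_assoc a b x.1)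
  smul_zero a := Subtype.ext (mul_zero a)
  smul_add a x y := Subtype.ext (mul_add a x.1 y.1)
  add_smul a b x := Subtype.ext (add_mul a b x.1)
  zero_smul x := Subtype.ext (zero_mul x.1)

@[simp] lemma asmul_val (a : A) (x : rightFix f) : (a • x).1 = a * x.1 := rfl

/-- The two-sided ideal `AeA`. -/
abbrev Js : TwoSidedIdeal A := TwoSidedIdeal.span {f.e}

lemma e_mem : f.e ∈ Js f := TwoSidedIdeal.subset_span rfl

lemma mem_J (x : rightFix f) (y : leftFix f) : x.1 * y.1 ∈ (Js f).asIdeal := by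
  rw [TwoSidedIdeal.mem_asIdeal]
  have : x.1 * y.1 = x.1 * f.e * y.1 := by rw [x.2]
  rw [this]
  exact (Js f).mul_mem_right _ _ ((Js f).mul_mem_left _ _ (e_mem f))

lemma memy (y : leftFix f) : y.1 ∈ (Js f).asIdeal := by
  rw [TwoSidedIdeal.mem_asIdeal, ← y.2]
  exact (Js f).mul_mem_right _ _ (e_mem f)

lemma lift_mem (t : rightFix f ⊗[ℤ] leftFix f) :
    TensorProduct.lift (cornerMulBil f) t ∈ (Js f).asIdeal.restrictScalars ℤ := by
  induction t using TensorProduct.induction_on with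
  | zero => simp only [map_zero]; exact Submodule.zero_mem _
  | tmul x y =>
      simp only [TensorProduct.lift.tmul, cornerMulBil, LinearMap.mk₂_apply]
      exact mem_J f x y
  | add t₁ t₂ h₁ h₂ => rw [map_add]; exact Submodule.add_mem _ h₁ h₂

/-- The multiplication map `Ae ⊗_ℤ eA → J`. -/
def mu0 : rightFix f ⊗[ℤ] leftFix f →ₗ[ℤ] ((Js f).asIdeal.restrictScalars ℤ) :=
  LinearMap.codRestrict _ (TensorProduct.lift (cornerMulBil f)) (lift_mem f)

lemma hker : cornerRel f ≤ LinearMap.ker (mu0 f) := by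
  rw [cornerRel, Submodule.span_le]
  rintro t ⟨x, c, y, rfl⟩
  rw [SetLike.mem_coe, LinearMap.mem_ker, map_sub]
  apply sub_eq_zero_of_eq
  apply Subtype.ext
  show TensorProduct.lift (cornerMulBil f) _ = TensorProduct.lift (cornerMulBil f) _
  simp only [TensorProduct.lift.tmul, cornerMulBil, LinearMap.mk₂_apply]
  exact mul_assoc x.1 c.1 y.1

/-- The induced multiplication map `Ae ⊗_{eAe} eA → J`. -/
def mubar : cornerTensor f →ₗ[ℤ] ((Js f).asIdeal.restrictScalars ℤ) :=
  Submodule.liftQ (cornerRel f) (mu0 f) (hker f)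

lemma mubar_mk (t : rightFix f ⊗[ℤ] leftFix f) :
    (mubar f (Submodule.Quotient.mk t) : A) = TensorProduct.lift (cornerMulBil f) t := rfl

lemma mubar_tmul (x : rightFix f) (y : leftFix f) :
    (mubar f (Submodule.Quotient.mk (x ⊗ₜ[ℤ] y)) : A) = x.1 * y.1 := rfl

/-- Left multiplication by `a` on `Ae`, as a `ℤ`-linear map. -/
def lmulFun (a : A) (x : rightFix f) : rightFix f := ⟨a * x.1, by rw [mul_assoc, x.2]⟩

/-- Left multiplication by `a` on `Ae`, as an additive map. -/
def lmulr (a : A) : rightFix f →ₗ[ℤ] rightFix f :=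
  (AddMonoidHom.mk' (lmulFun f a)
    (fun x y => Subtype.ext (mul_add a x.1 y.1))).toIntLinearMap

@[simp] lemma lmulr_val (a : A) (x : rightFix f) : (lmulr f a x).1 = a * x.1 := rfl

lemma hstab (a : A) :
    cornerRel f ≤ (cornerRel f).comap (LinearMap.rTensor (leftFix f) (lmulr f a)) := by
  refine Submodule.span_le.2 ?_
  rintro t ⟨x, c, y, rfl⟩
  change LinearMap.rTensor (leftFix f) (lmulr f a)
    ((MulOpposite.op c • x) ⊗ₜ[ℤ] y - x ⊗ₜ[ℤ] (c • y)) ∈ cornerRel f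
  rw [map_sub, LinearMap.rTensor_tmul,
    LinearMap.rTensor_tmul]
  have h1 : lmulr f a (MulOpposite.op c • x) = MulOpposite.op c • (lmulr f a x) :=
    Subtype.ext (by show a * (x.1 * c.1) = (a * x.1) * c.1; rw [mul_assoc])
  rw [h1]
  exact Submodule.subset_span ⟨lmulr f a x, c, y, rfl⟩

/-- Left multiplication by `a` on `Ae ⊗_{eAe} eA`. -/
def La (a : A) : cornerTensor f →ₗ[ℤ] cornerTensor f :=
  Submodule.mapQ (cornerRel f) (cornerRel f) (LinearMap.rTensor (leftFix f) (lmulr f a))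
    (hstab f a)

lemma La_mk (a : A) (t : rightFix f ⊗[ℤ] leftFix f) :
    La f a (Submodule.Quotient.mk t) =
      Submodule.Quotient.mk (LinearMap.rTensor (leftFix f) (lmulr f a) t) :=
  Submodule.mapQ_apply _ _ _ t

lemma La_tmul (a : A) (x : rightFix f) (y : leftFix f) :
    La f a (Submodule.Quotient.mk (x ⊗ₜ[ℤ] y)) =
      Submodule.Quotient.mk ((lmulr f a x) ⊗ₜ[ℤ] y) := by
  rw [La_mk, LinearMap.rTensor_tmul]

/-- `y ↦ class of e ⊗ y`. -/
def lam (y : leftFix f) : cornerTensor f := Submodule.Quotient.mk (er f ⊗ₜ[ℤ] y)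

/-- `v ↦ e * v` as an element of `eA`. -/
def theta0 (v : A) : leftFix f := ⟨f.e * v, by rw [← mul_assoc, f.idem]⟩

lemma theta0_add (v w : A) : theta0 f (v + w) = theta0 f v + theta0 f w :=
  Subtype.ext (mul_add f.e v w)

lemma lam_add (u v : leftFix f) : lam f (u + v) = lam f u + lam f v := by
  unfold lam
  rw [TensorProduct.tmul_add, Submodule.Quotient.mk_add]
  rfl

lemma lam_zero : lam f 0 = 0 := by
  unfold lam
  rw [TensorProduct.tmul_zero, Submodule.Quotient.mk_zero]
  rfl

/-- `e * x * e` as an element of the corner ring, for `x ∈ Ae`. -/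
def qmap (x : rightFix f) : Corner f :=
  ⟨f.e * x.1, by rw [← mul_assoc, f.idem, mul_assoc, x.2]⟩

lemma qmap_add (x y : rightFix f) : qmap f (x + y) = qmap f x + qmap f y :=
  Subtype.ext (mul_add f.e x.1 y.1)

@[simp] lemma qmap_zero : qmap f 0 = 0 := Subtype.ext (mul_zero f.e)

/-- Key identity (iii): `x ⊗ y = x • (e ⊗ y)`. -/
lemma La_lam (x : rightFix f) (y : leftFix f) :
    La f x.1 (lam f y) = Submodule.Quotient.mk (x ⊗ₜ[ℤ] y) := by
  rw [lam, La_tmul]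
  have h : lmulr f x.1 (er f) = x := Subtype.ext x.2
  rw [h]

/-- Key identity (iv): `e • z = e ⊗ θ(μ z)`. -/
lemma La_e (z : cornerTensor f) :
    La f f.e z = lam f (theta0 f (mubar f z : A)) := by
  obtain ⟨t, rfl⟩ := Submodule.Quotient.mk_surjective _ z
  induction t using TensorProduct.induction_on with
  | zero =>
      rw [Submodule.Quotient.mk_zero]
      change La f f.e (0 : cornerTensor f) = lam f (theta0 f (mubar f (0 : cornerTensor f) : A))
      rw [map_zero, map_zero]
      have h1 : theta0 f ((0 : (Js f).asIdeal.restrictScalars ℤ) : A) = 0 :=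
        Subtype.ext (mul_zero f.e)
      rw [h1, lam_zero]
  | tmul x y =>
      rw [La_tmul, mubar_tmul, lam]
      change (Submodule.Quotient.mk _ : (rightFix f ⊗[ℤ] leftFix f) ⧸ cornerRel f) = Submodule.Quotient.mk _
      rw [Submodule.Quotient.eq]
      apply Submodule.subset_span
      refine ⟨er f, qmap f x, y, ?_⟩
      have h1 : lmulr f f.e x = MulOpposite.op (qmap f x) • er f := by
        apply Subtype.ext
        show f.e * x.1 = f.e * (f.e * x.1)
        rw [← mul_assoc, f.idem]
      have h2 : theta0 f (x.1 * y.1) = qmap f x • y := by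
        apply Subtype.ext
        exact (mul_assoc f.e x.1 y.1).symm
      rw [h1, h2]
  | add t₁ t₂ h₁ h₂ =>
      rw [Submodule.Quotient.mk_add]
      erw [map_add, h₁, h₂, map_add]
      have h3 : ((mubar f (Submodule.Quotient.mk t₁) + mubar f (Submodule.Quotient.mk t₂) :
          (Js f).asIdeal.restrictScalars ℤ) : A)
          = (mubar f (Submodule.Quotient.mk t₁) : A)
            + (mubar f (Submodule.Quotient.mk t₂) : A) := rfl
      rw [h3, theta0_add, lam_add]

/-- The free `A`-module `⊕_{y ∈ eA} Ae`. -/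
abbrev FF := leftFix f →₀ rightFix f

/-- For `y ∈ eA`, the map `Ae → J`, `x ↦ x * y`. -/
def mulRightL (y : leftFix f) : rightFix f →ₗ[A] ((Js f).asIdeal) where
  toFun x := ⟨x.1 * y.1, mem_J f x y⟩
  map_add' x x' := Subtype.ext (add_mul x.1 x'.1 y.1)
  map_smul' a x := Subtype.ext (mul_assoc a x.1 y.1)

/-- The map `⊕_{y ∈ eA} Ae → J`, `(x_y)_y ↦ Σ x_y * y`. -/
def Phi : FF f →ₗ[A] ((Js f).asIdeal) := Finsupp.lsum ℕ (fun y => mulRightL f y)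

lemma Phi_single (y : leftFix f) (x : rightFix f) :
    Phi f (Finsupp.single y x) = mulRightL f y x := Finsupp.lsum_single _ _ _ _

/-- Right multiplication by `a` on `eA`. -/
def rmulFun (a : A) (y : leftFix f) : leftFix f := ⟨y.1 * a, by rw [← mul_assoc, y.2]⟩

lemma Phi_mapDomain (a : A) (φ : FF f) :
    (Phi f (Finsupp.mapDomain (rmulFun f a) φ) : A) = (Phi f φ : A) * a := by
  induction φ using Finsupp.induction with
  | zero => rw [Finsupp.mapDomain_zero, map_zero]; exact (zero_mul a).symm
  | single_add y x φ hy hx ih =>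
      rw [Finsupp.mapDomain_add, Finsupp.mapDomain_single, map_add, map_add]
      have hc : ∀ w w' : (Js f).asIdeal, ((w + w' : (Js f).asIdeal) : A) = (w : A) + (w' : A) :=
        fun _ _ => rfl
      rw [hc, hc, ih, Phi_single, Phi_single, add_mul]
      congr 1
      show x.1 * (y.1 * a) = x.1 * y.1 * a
      exact (mul_assoc x.1 y.1 a).symm

/-- The set of products `Σ x_y * y`. -/
def Tset : Set A := {a : A | ∃ φ : FF f, (Phi f φ : A) = a}

lemma e_in_T : f.e ∈ Tset f :=
  ⟨Finsupp.single (el f) (er f), by rw [Phi_single]; exact f.idem⟩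

/-- The set of products `Σ x_y * y` as a two-sided ideal. -/
def I0 : TwoSidedIdeal A :=
  TwoSidedIdeal.mk' (Tset f)
    ⟨0, by rw [map_zero]; rfl⟩
    (fun hx hy => by
      obtain ⟨φ, rfl⟩ := hx; obtain ⟨φ', rfl⟩ := hy
      exact ⟨φ + φ', by rw [map_add]; rfl⟩)
    (fun hx => by
      obtain ⟨φ, rfl⟩ := hx
      exact ⟨-φ, by rw [map_neg]; rfl⟩)
    (fun {x y} hy => by
      obtain ⟨φ, rfl⟩ := hy
      exact ⟨x • φ, by rw [map_smul]; rfl⟩)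
    (fun {x y} hx => by
      obtain ⟨φ, rfl⟩ := hx
      exact ⟨Finsupp.mapDomain (rmulFun f y) φ, Phi_mapDomain f y φ⟩)

lemma mem_Js_T {v : A} (hv : v ∈ (Js f).asIdeal) : ∃ φ : FF f, (Phi f φ : A) = v := by
  rw [TwoSidedIdeal.mem_asIdeal] at hv
  have h1 : v ∈ I0 f := by
    refine TwoSidedIdeal.mem_span_iff.mp hv (I0 f) ?_
    intro z hz
    rw [Set.mem_singleton_iff] at hz
    subst hz
    show f.e ∈ I0 f
    refine (TwoSidedIdeal.mem_mk' ..).mpr ?_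
    exact e_in_T f
  replace h1 := (TwoSidedIdeal.mem_mk' ..).mp h1
  exact h1

lemma Phi_surj : Function.Surjective (Phi f) := by
  intro w
  obtain ⟨φ, h⟩ := mem_Js_T f w.2
  exact ⟨φ, Subtype.ext h⟩

/-- The map `⊕_{y ∈ eA} Ae → Ae ⊗ eA`, `(x_y)_y ↦ Σ x_y ⊗ y`. -/
def PsiAdd : FF f →+ cornerTensor f :=
  Finsupp.liftAddHom (fun y =>
    { toFun := fun x => Submodule.Quotient.mk (x ⊗ₜ[ℤ] y)
      map_zero' := by
        show (Submodule.Quotient.mk ((0 : rightFix f) ⊗ₜ[ℤ] y) : cornerTensor f) = 0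
        rw [TensorProduct.zero_tmul, Submodule.Quotient.mk_zero]
      map_add' := fun x x' => by
        show (Submodule.Quotient.mk ((x + x') ⊗ₜ[ℤ] y) : cornerTensor f) = _
        rw [TensorProduct.add_tmul, Submodule.Quotient.mk_add]; rfl })

lemma Psi_single (y : leftFix f) (x : rightFix f) :
    PsiAdd f (Finsupp.single y x) = Submodule.Quotient.mk (x ⊗ₜ[ℤ] y) :=
  Finsupp.liftAddHom_apply_single _ _ _

lemma Psi_smul (a : A) (φ : FF f) : PsiAdd f (a • φ) = La f a (PsiAdd f φ) := by
  induction φ using Finsupp.induction with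
  | zero => rw [smul_zero, map_zero, map_zero]
  | single_add y x φ hy hx ih =>
      rw [smul_add, map_add, map_add, map_add, ih, Finsupp.smul_single, Psi_single, Psi_single,
        La_tmul]
      rfl

lemma mubar_Psi (φ : FF f) : (mubar f (PsiAdd f φ) : A) = (Phi f φ : A) := by
  induction φ using Finsupp.induction with
  | zero => rw [map_zero, map_zero, map_zero]; rfl
  | single_add y x φ hy hx ih =>
      rw [map_add, map_add, map_add]
      have hc : ∀ w w' : ((Js f).asIdeal.restrictScalars ℤ), ((w + w' : _) : A) = (w : A) + (w' : A) :=
        fun _ _ => rfl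
      have hc' : ∀ w w' : (Js f).asIdeal, ((w + w' : _) : A) = (w : A) + (w' : A) :=
        fun _ _ => rfl
      rw [hc, hc', ih, Psi_single, Phi_single, mubar_tmul]
      rfl

lemma total_mapRange (φ : FF f) :
    Finsupp.linearCombination (Corner f) (id : leftFix f → leftFix f)
      (Finsupp.mapRange (qmap f) (qmap_zero f) φ) = theta0 f (Phi f φ : A) := by
  induction φ using Finsupp.induction with
  | zero =>
      rw [Finsupp.mapRange_zero, map_zero, map_zero]
      exact (Subtype.ext (mul_zero f.e)).symm
  | single_add y x φ hy hx ih =>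
      rw [Finsupp.mapRange_add (qmap_add f), map_add, map_add, ih,
        Finsupp.mapRange_single, Finsupp.linearCombination_single, Phi_single]
      have hc' : ∀ w w' : (Js f).asIdeal, ((w + w' : _) : A) = (w : A) + (w' : A) :=
        fun _ _ => rfl
      rw [hc']
      have ht : theta0 f ((mulRightL f y x : A) + (Phi f φ : A))
          = theta0 f (mulRightL f y x : A) + theta0 f (Phi f φ : A) := theta0_add f _ _
      rw [ht]
      congr 1
      exact Subtype.ext (mul_assoc f.e x.1 y.1)

variable (tau : ((Js f).asIdeal) →ₗ[A] FF f)

/-- The section of the linear combination map, exhibiting `eA` as a projective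
`eAe`-module. -/
def sFun (u : leftFix f) : leftFix f →₀ Corner f :=
  Finsupp.mapRange (qmap f) (qmap_zero f) (tau ⟨u.1, memy f u⟩)

lemma projective_leftFix (htau : (Phi f) ∘ₗ tau = LinearMap.id) : Module.Projective (Corner f) (leftFix f) := by
  refine Module.projective_def.2 ⟨⟨⟨sFun f tau, ?_⟩, ?_⟩, ?_⟩
  · intro u v
    show Finsupp.mapRange _ _ (tau ⟨(u + v).1, _⟩) = _
    have h1 : (⟨(u + v).1, memy f (u + v)⟩ : (Js f).asIdeal)
        = ⟨u.1, memy f u⟩ + ⟨v.1, memy f v⟩ := Subtype.ext rfl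
    rw [h1, map_add, Finsupp.mapRange_add (qmap_add f)]
    rfl
  · intro c u
    show Finsupp.mapRange (qmap f) (qmap_zero f) (tau ⟨(c • u).1, memy f (c • u)⟩)
        = c • Finsupp.mapRange (qmap f) (qmap_zero f) (tau ⟨u.1, memy f u⟩)
    have h1 : (⟨(c • u).1, memy f (c • u)⟩ : (Js f).asIdeal)
        = c.1 • ⟨u.1, memy f u⟩ := Subtype.ext rfl
    rw [h1, map_smul]
    ext y
    rw [Finsupp.mapRange_apply, Finsupp.smul_apply, Finsupp.smul_apply, Finsupp.mapRange_apply]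
    apply Subtype.ext
    show f.e * (c.1 * (tau ⟨u.1, memy f u⟩ y).1) = c.1 * (f.e * (tau ⟨u.1, memy f u⟩ y).1)
    rw [← mul_assoc, ← mul_assoc, Corner.e_mul c, Corner.mul_e c]
  · intro u
    show Finsupp.linearCombination (Corner f) id (sFun f tau u) = u
    rw [sFun, total_mapRange]
    have h2 : Phi f (tau ⟨u.1, memy f u⟩) = ⟨u.1, memy f u⟩ := LinearMap.congr_fun htau _
    rw [h2]
    exact Subtype.ext u.2

/-- Coercion between the two incarnations of `J`. -/
def toJs (w : ((Js f).asIdeal.restrictScalars ℤ)) : ((Js f).asIdeal) := ⟨w.1, w.2⟩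

lemma Psi_tau_lam (htau : (Phi f) ∘ₗ tau = LinearMap.id) (y : leftFix f) :
    PsiAdd f (tau ⟨y.1, memy f y⟩) = lam f y := by
  set jy : ((Js f).asIdeal) := ⟨y.1, memy f y⟩ with hjy
  have e3 : (mubar f (PsiAdd f (tau jy)) : A) = y.1 := by
    rw [mubar_Psi]
    have h2 : Phi f (tau jy) = jy := LinearMap.congr_fun htau _
    rw [h2]
  have e1 : jy = f.e • jy := Subtype.ext y.2.symm
  have e2 : PsiAdd f (tau jy) = La f f.e (PsiAdd f (tau jy)) := by
    conv_lhs => rw [e1, map_smul, Psi_smul]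
  rw [e2, La_e, e3]
  congr 1
  exact Subtype.ext y.2

lemma sigma_id (htau : (Phi f) ∘ₗ tau = LinearMap.id) (z : cornerTensor f) :
    PsiAdd f (tau (toJs f (mubar f z))) = z := by
  obtain ⟨t, rfl⟩ := Submodule.Quotient.mk_surjective _ z
  induction t using TensorProduct.induction_on with
  | zero =>
      rw [Submodule.Quotient.mk_zero]
      change PsiAdd f (tau (toJs f (mubar f (0 : cornerTensor f)))) = (0 : cornerTensor f)
      rw [map_zero]
      have h0 : toJs f 0 = 0 := Subtype.ext rfl
      rw [h0, map_zero, map_zero]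
  | tmul x y =>
      have h1 : toJs f (mubar f (Submodule.Quotient.mk (x ⊗ₜ[ℤ] y)))
          = x.1 • (⟨y.1, memy f y⟩ : (Js f).asIdeal) := Subtype.ext (mubar_tmul f x y)
      rw [h1, map_smul, Psi_smul, Psi_tau_lam f tau htau y, La_lam]
  | add t₁ t₂ h₁ h₂ =>
      rw [Submodule.Quotient.mk_add]
      erw [map_add]
      have h0 : ∀ w w' : ((Js f).asIdeal.restrictScalars ℤ),
          toJs f (w + w') = toJs f w + toJs f w' := fun _ _ => Subtype.ext rfl
      rw [h0, map_add, map_add, h₁, h₂]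
      rfl

lemma mubar_bij (htau : (Phi f) ∘ₗ tau = LinearMap.id) : Function.Bijective (mubar f) := by
  constructor
  · intro z₁ z₂ h
    rw [← sigma_id f tau htau z₁, ← sigma_id f tau htau z₂, h]
  · intro w
    obtain ⟨φ, hφ⟩ := mem_Js_T f w.2
    exact ⟨PsiAdd f φ, Subtype.ext (by rw [mubar_Psi, hφ])⟩


end Stmt3

end Stmt3Aux

/-- If `J = AeA` for an idempotent `e ∈ A` and `J` is projective as a left
`A`-module, then `eA` is a projective left `eAe`-module and the multiplication map
`Ae ⊗_{eAe} eA → J` is bijective. -/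
theorem stmt_3 (k : Type u) [CommRing k] [IsNoetherianRing k]
    (A : Type u) [Ring A] [Algebra k A] [Module.Finite k A] [Module.Projective k A]
    (f : Idem A) (J : TwoSidedIdeal A)
    (hJ : J = TwoSidedIdeal.span {f.e})
    (hproj : Module.Projective A J.asIdeal) :
    Module.Projective (Corner f) (leftFix f) ∧
    ∃ ψ : cornerTensor f ≃ₗ[ℤ] (J.asIdeal.restrictScalars ℤ),
      ∀ t : rightFix f ⊗[ℤ] leftFix f,
        (ψ (Submodule.Quotient.mk t) : A) = TensorProduct.lift (cornerMulBil f) t := by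
  subst hJ
  haveI := hproj
  obtain ⟨tau, htau⟩ :=
    Module.projective_lifting_property (Stmt3.Phi f) LinearMap.id (Stmt3.Phi_surj f)
  constructor
  · exact Stmt3.projective_leftFix f tau htau
  · exact ⟨LinearEquiv.ofBijective (Stmt3.mubar f) (Stmt3.mubar_bij f tau htau),
      fun t => Stmt3.mubar_mk f t⟩

end
end

section
/- Let D be a discrete valuation ring with fraction field F and residue field f. Let B be a D-algebra that is finitely generated and projective as a D-module, and suppose that B ⊗_D F is isomorphic as an F-algebra to the full n × n matrix algebra over F and B ⊗_D f is isomorphic as an f-algebra to the full n × n matrix algebra over f. Then B is isomorphic as a D-algebra to the full n × n matrix algebra over D. -/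
universe u

open TensorProduct

set_option maxHeartbeats 1000000
set_option synthInstance.maxHeartbeats 1000000

noncomputable section

section Aux

variable {D : Type u} [CommRing D] [IsDomain D] [IsDiscreteValuationRing D]
    {F : Type u} [Field F] [Algebra D F] [IsFractionRing D F]
    {B : Type u} [Ring B] [Algebra D B] [Module.Finite D B] [Module.Projective D B]
    {n : ℕ}

set_option linter.unusedSectionVars false in
/-- The embedding of `B` into `F ⊗ B` is injective since `B` is flat. -/
lemma aux_includeRight_inj :
    Function.Injective (Algebra.TensorProduct.includeRight : B →ₐ[D] F ⊗[D] B) := by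
  have hj : Function.Injective (Algebra.linearMap D F) := IsFractionRing.injective D F
  have h2 := Module.Flat.rTensor_preserves_injective_linearMap (M := B)
      (Algebra.linearMap D F) hj
  intro x y hxy
  have e : ∀ b : B, LinearMap.rTensor B (Algebra.linearMap D F)
      ((TensorProduct.lid D B).symm b) = (1 : F) ⊗ₜ[D] b := by
    intro b
    simp [TensorProduct.lid_symm_apply]
  have : ((TensorProduct.lid D B).symm x) = ((TensorProduct.lid D B).symm y) := by
    apply h2
    rw [e, e]
    exact hxy
  exact (TensorProduct.lid D B).symm.injective this

end Aux

/-- Let `D` be a DVR with fraction field `F` and residue field `f`.  If `B`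
is a `D`-algebra, finitely generated and projective as a `D`-module, such that `B ⊗ F` and
`B ⊗ f` are full `n × n` matrix algebras, then `B` is a full `n × n` matrix algebra
over `D`. -/
theorem stmt_10 (D : Type u) [CommRing D] [IsDomain D] [IsDiscreteValuationRing D]
    (F : Type u) [Field F] [Algebra D F] [IsFractionRing D F]
    (B : Type u) [Ring B] [Algebra D B] [Module.Finite D B] [Module.Projective D B]
    (n : ℕ)
    (hF : Nonempty ((F ⊗[D] B) ≃ₐ[F] Matrix (Fin n) (Fin n) F))
    (hres : Nonempty ((IsLocalRing.ResidueField D ⊗[D] B) ≃ₐ[IsLocalRing.ResidueField D]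
      Matrix (Fin n) (Fin n) (IsLocalRing.ResidueField D))) :
    Nonempty (B ≃ₐ[D] Matrix (Fin n) (Fin n) D) := by
  obtain ⟨eF⟩ := hF
  obtain ⟨ek⟩ := hres
  by_cases hn : n = 0
  · -- degenerate case: everything is trivial
    subst hn
    haveI : Subsingleton (Matrix (Fin 0) (Fin 0) D) :=
      ⟨fun A B' => by ext i; exact i.elim0⟩
    haveI : Subsingleton (Matrix (Fin 0) (Fin 0) (IsLocalRing.ResidueField D)) :=
      ⟨fun A B' => by ext i; exact i.elim0⟩
    haveI : Subsingleton (IsLocalRing.ResidueField D ⊗[D] B) := ek.toEquiv.subsingleton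
    haveI : Subsingleton B := (IsLocalRing.subsingleton_tensorProduct (R := D)).mp ‹_›
    exact ⟨{ toFun := fun _ => 1, invFun := fun _ => 1,
             left_inv := fun _ => Subsingleton.elim _ _,
             right_inv := fun _ => Subsingleton.elim _ _,
             map_mul' := fun _ _ => Subsingleton.elim _ _,
             map_add' := fun _ _ => Subsingleton.elim _ _,
             commutes' := fun _ => Subsingleton.elim _ _ }⟩
  haveI : Nonempty (Fin n) := ⟨⟨0, Nat.pos_of_ne_zero hn⟩⟩
  -- the embedding ψ : B →ₐ[D] Mₙ(F)
  let ψ : B →ₐ[D] Matrix (Fin n) (Fin n) F :=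
    ((eF.restrictScalars D).toAlgHom).comp Algebra.TensorProduct.includeRight
  have hψ : Function.Injective ψ :=
    (eF.restrictScalars D).injective.comp aux_includeRight_inj
  -- the lattice L ⊆ V = Fⁿ generated by the action of B on the standard basis
  let colMap : Fin n → (B →ₗ[D] (Fin n → F)) := fun j =>
    { toFun := fun b => (ψ b).mulVec (Pi.single j 1)
      map_add' := by
        intro a b
        simp only [map_add, Matrix.add_mulVec]
      map_smul' := by
        intro d b
        show (ψ (d • b)).mulVec (Pi.single j 1) = d • ((ψ b).mulVec (Pi.single j 1))
        rw [map_smul]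
        funext i
        simp [Matrix.mulVec_single, Pi.smul_apply, smul_mul_assoc] }
  let L : Submodule D (Fin n → F) := ⨆ j, LinearMap.range (colMap j)
  have hmem : ∀ (b : B) (j : Fin n), (ψ b).mulVec (Pi.single j 1) ∈ L := fun b j =>
    Submodule.mem_iSup_of_mem j ⟨b, rfl⟩
  have hsingle : ∀ j : Fin n, (Pi.single j 1 : Fin n → F) ∈ L := by
    intro j
    have := hmem 1 j
    rwa [map_one, Matrix.one_mulVec] at this
  have hstab : ∀ (b : B), ∀ x ∈ L, (ψ b).mulVec x ∈ L := by
    intro b x hx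
    have : L ≤ Submodule.comap ((Matrix.mulVecLin (ψ b)).restrictScalars D) L := by
      apply iSup_le
      rintro j _ ⟨c, rfl⟩
      simp only [Submodule.mem_comap, LinearMap.restrictScalars_apply, Matrix.mulVecLin_apply]
      show (ψ b).mulVec ((ψ c).mulVec (Pi.single j 1)) ∈ L
      rw [Matrix.mulVec_mulVec, ← map_mul]
      exact hmem (b * c) j
    exact this hx
  -- the action of B on L
  let φ : B →ₐ[D] Module.End D L :=
    { toFun := fun b => LinearMap.restrict ((Matrix.mulVecLin (ψ b)).restrictScalars D)
        (p := L) (q := L) (hstab b)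
      map_one' := by
        ext x
        simp [LinearMap.restrict_apply, map_one, Matrix.one_mulVec]
      map_mul' := by
        intro a b
        ext x
        simp only [LinearMap.restrict_apply, LinearMap.restrictScalars_apply,
          Matrix.mulVecLin_apply, map_mul, Module.End.mul_apply]
        show (ψ a * ψ b).mulVec x.1 _ = (ψ a).mulVec ((ψ b).mulVec x.1) _
        rw [Matrix.mulVec_mulVec]
      map_zero' := by
        ext x
        simp [LinearMap.restrict_apply]
      map_add' := by
        intro a b
        ext x
        simp [LinearMap.restrict_apply, map_add, Matrix.add_mulVec]
        rfl
      commutes' := by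
        intro d
        ext x
        simp only [LinearMap.restrict_apply, LinearMap.restrictScalars_apply,
          Matrix.mulVecLin_apply, AlgHom.commutes]
        have : (↑(((algebraMap D (Matrix (Fin n) (Fin n) F)) d).mulVec x) : Fin n → F)
            = ↑(((algebraMap D (Module.End D L)) d) x) := by
          rw [Module.algebraMap_end_apply]
          rw [Matrix.algebraMap_eq_diagonal]
          funext i
          simp [Matrix.mulVec_diagonal, Algebra.smul_def, Pi.algebraMap_apply]
        exact congrFun this _ }
  have hφinj : Function.Injective φ := by
    intro a b hab
    apply hψ
    apply Matrix.ext
    intro i j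
    have h1 : φ a ⟨Pi.single j 1, hsingle j⟩ = φ b ⟨Pi.single j 1, hsingle j⟩ := by rw [hab]
    have h2 : (ψ a).mulVec (Pi.single j 1) = (ψ b).mulVec (Pi.single j 1) :=
      congrArg Subtype.val h1
    have := congrFun h2 i
    simpa [Matrix.mulVec_single] using this
  -- L is finitely generated, torsion-free, hence free; compute its rank
  have hLfg : L.FG := by
    apply Submodule.fg_iSup
    intro j
    rw [LinearMap.range_eq_map]
    exact Submodule.FG.map _ (Module.finite_def.mp inferInstance)
  haveI : Module.Finite D L := Module.Finite.iff_fg.mpr hLfg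
  haveI : Module.IsTorsionFree D F :=
    Module.isTorsionFree_iff_algebraMap_injective.mpr (IsFractionRing.injective D F)
  haveI : Module.Free D L := Module.free_of_finite_type_torsion_free'
  let ι := Module.Free.ChooseBasisIndex D L
  let bL : Module.Basis ι D L := Module.Free.chooseBasis D L
  let v : ι → (Fin n → F) := fun i => (bL i : Fin n → F)
  have hv : LinearIndependent D v :=
    bL.linearIndependent.map' L.subtype (Submodule.ker_subtype L)
  have hvF : LinearIndependent F v := (LinearIndependent.iff_fractionRing D F).mp hv
  have h1 : Submodule.span D (Set.range v) = L := by
    have : Set.range v = L.subtype '' Set.range bL := by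
      rw [← Set.range_comp]; rfl
    rw [this, ← Submodule.map_span, bL.span_eq, Submodule.map_top, Submodule.range_subtype]
  have hspan : ⊤ ≤ Submodule.span F (Set.range v) := by
    rw [← (Pi.basisFun F (Fin n)).span_eq]
    apply Submodule.span_le.mpr
    rintro _ ⟨j, rfl⟩
    have hj : (Pi.single j 1 : Fin n → F) ∈ Submodule.span D (Set.range v) := by
      rw [h1]; exact hsingle j
    have := Submodule.span_le_restrictScalars D F (Set.range v) hj
    simpa [Pi.basisFun_apply] using this
  let bV : Module.Basis ι F (Fin n → F) := Module.Basis.mk hvF hspan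
  have hcard : Fintype.card ι = n := by
    have h2 := Module.finrank_eq_card_basis bV
    rw [Module.finrank_pi] at h2
    simpa using h2.symm
  let basis : Module.Basis (Fin n) D L := bL.reindex (Fintype.equivFinOfCardEq hcard)
  let φ' : B →ₐ[D] Matrix (Fin n) (Fin n) D :=
    (LinearMap.toMatrixAlgEquiv basis).toAlgHom.comp φ
  have hφ'inj : Function.Injective φ' :=
    (LinearMap.toMatrixAlgEquiv basis).injective.comp hφinj
  -- surjectivity via reduction mod the maximal ideal
  let k := IsLocalRing.ResidueField D
  let M := Matrix (Fin n) (Fin n) D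
  let Ψ : k ⊗[D] B →ₐ[k] k ⊗[D] M :=
    Algebra.TensorProduct.map (AlgHom.id k k) φ'
  let bM : Module.Basis (Fin n × Fin n) D M := Matrix.stdBasis D (Fin n) (Fin n)
  let bT : Module.Basis (Fin n × Fin n) k (k ⊗[D] M) := Algebra.TensorProduct.basis k bM
  haveI : Module.Finite k (k ⊗[D] M) := Module.Finite.of_basis bT
  haveI : Nontrivial (k ⊗[D] M) := by
    obtain ⟨p⟩ := (inferInstance : Nonempty (Fin n × Fin n))
    exact nontrivial_of_ne _ _ (bT.ne_zero p)
  let χ : Matrix (Fin n) (Fin n) k →ₐ[k] k ⊗[D] M := Ψ.comp ek.symm.toAlgHom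
  have hχinj : Function.Injective χ := χ.toRingHom.injective
  have hfr1 : Module.finrank k (Matrix (Fin n) (Fin n) k) = Module.finrank k (k ⊗[D] M) := by
    rw [Module.finrank_eq_card_basis bT, Module.finrank_matrix]
    simp
  have hχsurj : Function.Surjective χ :=
    (LinearMap.injective_iff_surjective_of_finrank_eq_finrank (f := χ.toLinearMap) hfr1).mp hχinj
  have hΨsurj : Function.Surjective Ψ := by
    intro z
    obtain ⟨y, hy⟩ := hχsurj z
    exact ⟨ek.symm y, hy⟩
  have hrange : LinearMap.range φ'.toLinearMap = ⊤ := by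
    rw [← IsLocalRing.map_tensorProduct_mk_eq_top (R := D) (M := M)]
    rw [eq_top_iff]
    intro z hz
    clear hz
    obtain ⟨t, rfl⟩ := hΨsurj z
    induction t using TensorProduct.induction_on with
    | zero => simp
    | tmul c b =>
      obtain ⟨d, rfl⟩ := IsLocalRing.residue_surjective (R := D) c
      rw [Algebra.TensorProduct.map_tmul]
      have h3 : (IsLocalRing.residue D d) ⊗ₜ[D] (φ' b)
          = d • ((1:k) ⊗ₜ[D] (φ' b)) := by
        rw [TensorProduct.smul_tmul']
        congr 1
        rw [Algebra.smul_def, mul_one]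
        rfl
      have h4 : ((AlgHom.id k k) (IsLocalRing.residue D d)) = IsLocalRing.residue D d := rfl
      rw [h4, h3]
      refine Submodule.smul_mem _ d ?_
      exact Submodule.mem_map_of_mem ⟨b, rfl⟩
    | add x y hx hy =>
      rw [map_add]
      exact Submodule.add_mem _ hx hy
  have hφ'surj : Function.Surjective φ' := LinearMap.range_eq_top.mp hrange
  exact ⟨AlgEquiv.ofBijective φ' ⟨hφ'inj, hφ'surj⟩⟩

end
end

section
/- Let J be an ideal of A such that A/J is projective as a k-module. Suppose there exist an idempotent e ∈ J, a k-subalgebra E of the corner ring eAe with identity element e, and an E-submodule P of the left E-module eA that is projective as an E-module, such that the natural multiplication map Ae ⊗_E P → J, a ⊗ p ↦ ap, is bijective. Then J² = J and J is projective as a left A-module. -/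
universe u

open TensorProduct

set_option maxHeartbeats 1000000
set_option synthInstance.maxHeartbeats 1000000

noncomputable section

section CornerSub

variable {k : Type u} [CommRing k] {A : Type u} [Ring A] [Algebra k A]

namespace rightFix

variable {f : Idem A}

instance : SMul k (rightFix f) := ⟨fun c x => ⟨c • x.1, by rw [smul_mul_assoc, x.2]⟩⟩

instance : Module k (rightFix f) :=
  Function.Injective.module k
    { toFun := fun x : rightFix f => x.1, map_zero' := rfl, map_add' := fun _ _ => rfl }
    Subtype.coe_injective (fun _ _ => rfl)

end rightFix

namespace leftFix

variable {f : Idem A}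

instance : SMul k (leftFix f) := ⟨fun c x => ⟨c • x.1, by rw [mul_smul_comm, x.2]⟩⟩

instance : Module k (leftFix f) :=
  Function.Injective.module k
    { toFun := fun x : leftFix f => x.1, map_zero' := rfl, map_add' := fun _ _ => rfl }
    Subtype.coe_injective (fun _ _ => rfl)

end leftFix

/-- A `k`-subalgebra `E` of the corner ring `eAe` with identity element `e`. -/
structure CornerSubalgebra (k : Type u) (A : Type u) [CommRing k] [Ring A] [Algebra k A]
    extends Idem A where
  carrier : Submodule k A
  e_mem : e ∈ carrier
  mul_mem : ∀ {x y : A}, x ∈ carrier → y ∈ carrier → x * y ∈ carrier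
  corner_fix : ∀ {x : A}, x ∈ carrier → e * x * e = x

namespace CornerSubalgebra

variable (S : CornerSubalgebra k A)

/-- The underlying type of the subalgebra `E ⊆ eAe`. -/
def E : Type u := ↥S.carrier

instance : AddCommGroup S.E := inferInstanceAs (AddCommGroup ↥S.carrier)
instance : Module k S.E := inferInstanceAs (Module k ↥S.carrier)

lemma e_mul_val (x : S.E) : S.e * x.1 = x.1 :=
  Corner.e_mul (f := S.toIdem) ⟨x.1, S.corner_fix x.2⟩

lemma mul_e_val (x : S.E) : x.1 * S.e = x.1 :=
  Corner.mul_e (f := S.toIdem) ⟨x.1, S.corner_fix x.2⟩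

instance : Mul S.E := ⟨fun x y => ⟨x.1 * y.1, S.mul_mem x.2 y.2⟩⟩
instance : One S.E := ⟨⟨S.e, S.e_mem⟩⟩

instance : Ring S.E :=
  { (inferInstance : AddCommGroup S.E) with
    mul := (· * ·)
    one := 1
    mul_assoc := fun x y z => Subtype.ext (mul_assoc x.1 y.1 z.1)
    one_mul := fun x => Subtype.ext (S.e_mul_val x)
    mul_one := fun x => Subtype.ext (S.mul_e_val x)
    left_distrib := fun x y z => Subtype.ext (mul_add x.1 y.1 z.1)
    right_distrib := fun x y z => Subtype.ext (add_mul x.1 y.1 z.1)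
    zero_mul := fun x => Subtype.ext (zero_mul x.1)
    mul_zero := fun x => Subtype.ext (mul_zero x.1) }

instance : Algebra k S.E where
  smul := (· • ·)
  algebraMap :=
    { toFun := fun c => ⟨c • S.e, S.carrier.smul_mem c S.e_mem⟩
      map_one' := Subtype.ext (one_smul k S.e)
      map_mul' := fun a b => Subtype.ext (by
        show (a * b) • S.e = (a • S.e) * (b • S.e)
        rw [smul_mul_assoc, mul_smul_comm, S.idem, mul_smul])
      map_zero' := Subtype.ext (zero_smul k S.e)
      map_add' := fun a b => Subtype.ext (add_smul a b S.e) }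
  commutes' := fun c x => Subtype.ext (by
    show (c • S.e) * x.1 = x.1 * (c • S.e)
    rw [smul_mul_assoc, mul_smul_comm, S.e_mul_val, S.mul_e_val])
  smul_def' := fun c x => Subtype.ext (by
    show c • x.1 = (c • S.e) * x.1
    rw [smul_mul_assoc, S.e_mul_val])

/-- `eA` is a left module over `E`. -/
instance : SMul S.E (leftFix S.toIdem) :=
  ⟨fun c x => ⟨c.1 * x.1, by
    show S.e * (c.1 * x.1) = c.1 * x.1
    rw [← mul_assoc, S.e_mul_val]⟩⟩

instance : Module S.E (leftFix S.toIdem) where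
  one_smul x := Subtype.ext (by
    show (1 : S.E).1 * x.1 = x.1
    exact x.2)
  mul_smul c d x := Subtype.ext (mul_assoc c.1 d.1 x.1)
  smul_zero c := Subtype.ext (mul_zero c.1)
  smul_add c x y := Subtype.ext (mul_add c.1 x.1 y.1)
  add_smul c d x := Subtype.ext (add_mul c.1 d.1 x.1)
  zero_smul x := Subtype.ext (zero_mul x.1)

instance : IsScalarTower k S.E (leftFix S.toIdem) :=
  ⟨fun c s x => Subtype.ext (smul_mul_assoc c s.1 x.1)⟩

/-- `Ae` is a right module over `E`. -/
instance : SMul S.Eᵐᵒᵖ (rightFix S.toIdem) :=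
  ⟨fun c x => ⟨x.1 * c.unop.1, by
    show x.1 * c.unop.1 * S.e = x.1 * c.unop.1
    rw [mul_assoc, S.mul_e_val]⟩⟩

variable (P : Submodule S.E (leftFix S.toIdem))

/-- The multiplication map `Ae × P → A` as a `k`-bilinear map. -/
def mulBil : rightFix S.toIdem →ₗ[k] ↥P →ₗ[k] A :=
  LinearMap.mk₂ k (fun x p => x.1 * p.1.1)
    (fun x x' p => add_mul x.1 x'.1 p.1.1)
    (fun c x p => smul_mul_assoc c x.1 p.1.1)
    (fun x p p' => mul_add x.1 p.1.1 p'.1.1)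
    (fun c x p => mul_smul_comm c x.1 p.1.1)

/-- Balancing relations defining `Ae ⊗_E P` as a quotient of `Ae ⊗_k P`. -/
def subRel : Submodule k (rightFix S.toIdem ⊗[k] ↥P) :=
  Submodule.span k
    {t | ∃ (x : rightFix S.toIdem) (c : S.E) (p : ↥P),
      t = (MulOpposite.op c • x) ⊗ₜ[k] p - x ⊗ₜ[k] (c • p)}

/-- The balanced tensor product `Ae ⊗_E P`. -/
def subTensor : Type u := (rightFix S.toIdem ⊗[k] ↥P) ⧸ subRel S P

instance : AddCommGroup (subTensor S P) :=
  inferInstanceAs (AddCommGroup ((rightFix S.toIdem ⊗[k] ↥P) ⧸ subRel S P))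

instance : Module k (subTensor S P) :=
  inferInstanceAs (Module k ((rightFix S.toIdem ⊗[k] ↥P) ⧸ subRel S P))

end CornerSubalgebra

end CornerSub

/-!
Every element of `J` is a sum of products `x q` with `x ∈ Ae` and `q ∈ P ⊆ eA`, and
`x q = (x e) (e q)` has both factors in `J`; hence `J = J²`.

For projectivity, choose a splitting `s : P → E^(P)` of the augmentation `E^(P) → P`.
The map `Ae ⊗_E P → A^(P)`, `x ⊗ q ↦ (x s(q)ᵢ)ᵢ`, commutes with left multiplication by `A`,
and through `J ≅ Ae ⊗_E P` it is a section of `A^(P) → J`, `(aᵢ) ↦ ∑ aᵢ i`.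
So `J` is a direct summand of a free `A`-module.
-/

namespace rightFix

variable (k : Type u) [CommRing k] {A : Type u} [Ring A] [Algebra k A] {f : Idem A}

def mulLeft (a : A) : rightFix f →ₗ[k] rightFix f where
  toFun x := ⟨a * x.1, by rw [mul_assoc, x.2]⟩
  map_add' x y := Subtype.ext (mul_add a x.1 y.1)
  map_smul' c x := Subtype.ext (mul_smul_comm c a x.1)

end rightFix

namespace CornerSubalgebra

variable {k : Type u} [CommRing k] {A : Type u} [Ring A] [Algebra k A]
  {S : CornerSubalgebra k A} {P : Submodule S.E (leftFix S.toIdem)}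

lemma val_mem_of_e_mem {J : TwoSidedIdeal A} (heJ : S.e ∈ J) (q : P) : q.1.1 ∈ J := by
  rw [← q.1.2]
  exact J.mul_mem_right _ _ heJ

lemma lift_mulBil_mem_mul {J : TwoSidedIdeal A} (heJ : S.e ∈ J) (t : rightFix S.toIdem ⊗[k] P) :
    lift (mulBil S P) t ∈ J.asIdeal.restrictScalars k * J.asIdeal.restrictScalars k := by
  induction t using TensorProduct.induction_on with
  | zero => simp
  | add t t' ht ht' => rw [map_add]; exact add_mem ht ht'
  | tmul x q =>
    have hxe : x.1 * S.e ∈ J := J.mul_mem_left _ _ heJ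
    rw [lift.tmul, mulBil, LinearMap.mk₂_apply, ← x.2]
    exact Submodule.mul_mem_mul hxe (val_mem_of_e_mem heJ q)

theorem isIdempotentIdeal_of_le_range {J : TwoSidedIdeal A} (heJ : S.e ∈ J)
    (hJ : J.asIdeal.restrictScalars k ≤ LinearMap.range (lift (mulBil S P))) :
    IsIdempotentIdeal k J := by
  refine le_antisymm (Submodule.mul_le.mpr fun a _ b hb => J.mul_mem_left a b hb) fun j hj => ?_
  obtain ⟨t, rfl⟩ := hJ hj
  exact lift_mulBil_mem_mul heJ t

lemma lift_mulBil_rTensor_mulLeft (a : A) (t : rightFix S.toIdem ⊗[k] P) :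
    lift (mulBil S P) (LinearMap.rTensor P (rightFix.mulLeft k a) t)
      = a * lift (mulBil S P) t := by
  induction t using TensorProduct.induction_on with
  | zero => simp
  | add t t' ht ht' => simp only [map_add, ht, ht', mul_add]
  | tmul x q => exact mul_assoc a x.1 q.1.1

variable (P) in
/-- `x ⊗ q ↦ (x s(q)ᵢ)ᵢ`, i.e. `Ae ⊗ s` followed by `Ae ⊗_E E^(P) ≅ (Ae)^(P) ⊆ A^(P)`. -/
def mulCoord (s : P →ₗ[S.E] (P →₀ S.E)) : rightFix S.toIdem →ₗ[k] P →ₗ[k] (P →₀ A) :=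
  LinearMap.mk₂ k (fun x q => (s q).mapRange (fun c => x.1 * c.1) (mul_zero x.1))
    (fun x x' q => Finsupp.ext fun i => add_mul x.1 x'.1 _)
    (fun c x q => Finsupp.ext fun i => smul_mul_assoc c x.1 _)
    (fun x q q' => Finsupp.ext fun i => by
      simp only [map_add, Finsupp.add_apply]
      exact mul_add x.1 _ _)
    (fun c x q => Finsupp.ext fun i => by
      simp only [LinearMap.map_smul_of_tower, Finsupp.smul_apply]
      exact mul_smul_comm c x.1 _)

variable (s : P →ₗ[S.E] (P →₀ S.E))

lemma subRel_le_ker_lift_mulCoord : subRel S P ≤ LinearMap.ker (lift (mulCoord P s)) := by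
  refine Submodule.span_le.mpr ?_
  rintro _ ⟨x, c, q, rfl⟩
  rw [SetLike.mem_coe, LinearMap.mem_ker, map_sub, sub_eq_zero]
  ext i
  simp only [lift.tmul, mulCoord, LinearMap.mk₂_apply, map_smul]
  exact mul_assoc x.1 c.1 _

lemma lift_mulCoord_rTensor_mulLeft (a : A) (t : rightFix S.toIdem ⊗[k] P) :
    lift (mulCoord P s) (LinearMap.rTensor P (rightFix.mulLeft k a) t)
      = a • lift (mulCoord P s) t := by
  induction t using TensorProduct.induction_on with
  | zero => simp
  | add t t' ht ht' => simp only [map_add, ht, ht', smul_add]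
  | tmul x q => exact Finsupp.ext fun i => mul_assoc a x.1 _

lemma linearCombination_lift_mulCoord
    (hs : Finsupp.linearCombination S.E id ∘ₗ s = LinearMap.id) (t : rightFix S.toIdem ⊗[k] P) :
    Finsupp.linearCombination A (fun i : P => i.1.1) (lift (mulCoord P s) t)
      = lift (mulBil S P) t := by
  induction t using TensorProduct.induction_on with
  | zero => simp
  | add t t' ht ht' => simp only [map_add, ht, ht']
  | tmul x q =>
    have hq : Finsupp.linearCombination S.E id (s q) = q := LinearMap.congr_fun hs q
    rw [lift.tmul, lift.tmul]
    conv_rhs => rw [← hq, Finsupp.linearCombination_apply, map_finsuppSum]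
    simp only [Finsupp.linearCombination_apply, mulCoord, LinearMap.mk₂_apply]
    -- `rw` fails here: `x.1` is ill-typed at reducible transparency since `rightFix` is a `def`
    exact (Finsupp.sum_mapRange_index (h := fun (i : P) (a : A) => a • i.1.1)
      fun _ => zero_smul A _).trans (Finsupp.sum_congr fun i _ => mul_assoc x.1 _ _)

variable {J : TwoSidedIdeal A} (ψ : subTensor S P ≃ₗ[k] J.asIdeal.restrictScalars k)

lemma le_range_lift_mulBil
    (hψ : ∀ t, (ψ (Submodule.Quotient.mk t) : A) = lift (mulBil S P) t) :
    J.asIdeal.restrictScalars k ≤ LinearMap.range (lift (mulBil S P)) := fun j hj => by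
  obtain ⟨t, ht⟩ := Submodule.Quotient.mk_surjective _ (ψ.symm ⟨j, hj⟩)
  exact ⟨t, by rw [← hψ, ht, LinearEquiv.apply_symm_apply]⟩

variable (P) in
def tensorCoord : subTensor S P →ₗ[k] (P →₀ A) :=
  (subRel S P).liftQ (lift (mulCoord P s)) (subRel_le_ker_lift_mulCoord s)

lemma tensorCoord_symm_apply_of_eq
    (hψ : ∀ t, (ψ (Submodule.Quotient.mk t) : A) = lift (mulBil S P) t)
    {t : rightFix S.toIdem ⊗[k] P} {j : J.asIdeal.restrictScalars k}
    (h : lift (mulBil S P) t = j) : tensorCoord P s (ψ.symm j) = lift (mulCoord P s) t := by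
  rw [ψ.symm_apply_eq.mpr (Subtype.ext ((hψ t).trans h).symm)]
  exact Submodule.liftQ_apply _ _ t

def idealCoord (hψ : ∀ t, (ψ (Submodule.Quotient.mk t) : A) = lift (mulBil S P) t) :
    J.asIdeal →ₗ[A] (P →₀ A) where
  toFun j := tensorCoord P s (ψ.symm j)
  map_add' j j' := map_add (tensorCoord P s ∘ₗ ψ.symm.toLinearMap) j j'
  map_smul' a j := by
    obtain ⟨t, ht⟩ := le_range_lift_mulBil ψ hψ j.2
    have hat : lift (mulBil S P) (LinearMap.rTensor P (rightFix.mulLeft k a) t) = a * j := by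
      rw [lift_mulBil_rTensor_mulLeft, ht]
    calc tensorCoord P s (ψ.symm (a • j))
        = lift (mulCoord P s) (LinearMap.rTensor P (rightFix.mulLeft k a) t) :=
          tensorCoord_symm_apply_of_eq s ψ hψ hat
      _ = a • tensorCoord P s (ψ.symm j) := by
          rw [lift_mulCoord_rTensor_mulLeft, tensorCoord_symm_apply_of_eq s ψ hψ ht]

lemma linearCombination_comp_idealCoord (heJ : S.e ∈ J)
    (hs : Finsupp.linearCombination S.E id ∘ₗ s = LinearMap.id)
    (hψ : ∀ t, (ψ (Submodule.Quotient.mk t) : A) = lift (mulBil S P) t) :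
    Finsupp.linearCombination A (fun i : P => (⟨i.1.1, val_mem_of_e_mem heJ i⟩ : J.asIdeal))
      ∘ₗ idealCoord s ψ hψ = LinearMap.id := by
  ext j : 1
  obtain ⟨t, ht⟩ := le_range_lift_mulBil ψ hψ j.2
  have hj : idealCoord s ψ hψ j = lift (mulCoord P s) t := tensorCoord_symm_apply_of_eq s ψ hψ ht
  refine Subtype.ext ?_
  rw [LinearMap.comp_apply, hj, ← J.asIdeal.subtype_apply, Finsupp.apply_linearCombination]
  exact (linearCombination_lift_mulCoord s hs t).trans ht

theorem projective_asIdeal (heJ : S.e ∈ J) (hP : Module.Projective S.E P)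
    (hψ : ∀ t, (ψ (Submodule.Quotient.mk t) : A) = lift (mulBil S P) t) :
    Module.Projective A J.asIdeal := by
  obtain ⟨s, hs⟩ := Module.projective_def'.mp hP
  exact .of_split _ _ (linearCombination_comp_idealCoord s ψ heJ hs hψ)

end CornerSubalgebra

theorem stmt_16_general (k : Type u) [CommRing k]
    (A : Type u) [Ring A] [Algebra k A]
    (J : TwoSidedIdeal A)
    (S : CornerSubalgebra k A) (heJ : S.e ∈ J)
    (P : Submodule S.E (leftFix S.toIdem))
    (hP : Module.Projective S.E P)
    (ψ : CornerSubalgebra.subTensor S P ≃ₗ[k] (J.asIdeal.restrictScalars k))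
    (hψ : ∀ t : rightFix S.toIdem ⊗[k] ↥P,
      (ψ (Submodule.Quotient.mk t) : A) = TensorProduct.lift (CornerSubalgebra.mulBil S P) t) :
    IsIdempotentIdeal k J ∧ Module.Projective A J.asIdeal :=
  ⟨CornerSubalgebra.isIdempotentIdeal_of_le_range heJ
      (CornerSubalgebra.le_range_lift_mulBil ψ hψ),
    CornerSubalgebra.projective_asIdeal ψ heJ hP hψ⟩

/-- Suppose there are an idempotent `e ∈ J`, a `k`-subalgebra `E ⊆ eAe`
with identity `e`, and a projective `E`-submodule `P ⊆ eA` such that the multiplication map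
`Ae ⊗_E P → J` is bijective.  If `A/J` is `k`-projective, then `J² = J` and `J` is
projective as a left `A`-module. -/
theorem stmt_16 (k : Type u) [CommRing k] [IsNoetherianRing k]
    (A : Type u) [Ring A] [Algebra k A] [Module.Finite k A] [Module.Projective k A]
    (J : TwoSidedIdeal A)
    (hAJ : Module.Projective k (A ⧸ (J.asIdeal.restrictScalars k)))
    (S : CornerSubalgebra k A) (heJ : S.e ∈ J)
    (P : Submodule S.E (leftFix S.toIdem))
    (hP : Module.Projective S.E P)
    (ψ : CornerSubalgebra.subTensor S P ≃ₗ[k] (J.asIdeal.restrictScalars k))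
    (hψ : ∀ t : rightFix S.toIdem ⊗[k] ↥P,
      (ψ (Submodule.Quotient.mk t) : A) = TensorProduct.lift (CornerSubalgebra.mulBil S P) t) :
    IsIdempotentIdeal k J ∧ Module.Projective A J.asIdeal :=
  stmt_16_general k A J S heJ P hP ψ hψ

end
end
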